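/- Fix an integer p ≥ 3 and a real b > 1/(p−2). For U = (U₁,…,U_p) ∈ ℝ^p, let M_p(U) be the set of probability measures ∑_{i=1}^p c_i δ_{U_i} with all c_i > 0 and ∑_{i=1}^p c_i = 1. Then the set of U ∈ ℝ^p for which some measure of M_p(U) does not belong to the class C(1,2b) has p-dimensional Lebesgue measure zero; equivalently, for Lebesgue-almost every U ∈ ℝ^p, every probability measure ∑_{i=1}^p c_i δ_{U_i} with all c_i>0 belongs to C(1,2b). -/

import Mathlib

/-!
For probability weights `cᵢ > 0` and `i ≠ j`, `|∑ₖ cₖ e^{itUₖ}| ≤ 1 - cᵢ cⱼ (1 - cos t(Uⱼ - Uᵢ))`,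
and `1 - cos 2πx ≥ 8 ‖x‖²` where `‖x‖ = |x - round x|` is the distance from `x` to `ℤ`. It therefore
suffices that for a.e. `U`, for every large `|s|` some `s (Uⱼ - U₀)` is `|s|^{-b}`-far from `ℤ`.
Put `α = (Uⱼ - U₀)_{j ≥ 1} ∈ ℝ^{p-1}` and `β = (αⱼ / α₀)_{j ≥ 1} ∈ ℝ^{p-2}`. If `s α₀` is close to
the integer `n = round (s α₀)`, then `s αⱼ = (s α₀) βⱼ` is close to `n βⱼ`, so it is enough that for
a.e. `β` and all large `|n|` some `n βⱼ` is `|n|^{-b'}`-far from `ℤ`, with `1/(p-2) < b' < b`.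
This is Borel–Cantelli: inside a box, the set of `β` failing this at `n` has volume
`O(|n|^{-(p-2)b'})`, which is summable over `n ∈ ℤ`.
-/

open MeasureTheory Real

/-- The weak Cramer class `C(1,b)` for probability measures on `ℝ`:
`|φ_μ(t)| ≤ 1 - C/|t|^b` for `|t|` large enough. -/
def memC1 (μ : Measure ℝ) (b : ℝ) : Prop :=
  ∃ C > (0 : ℝ), ∃ R > (0 : ℝ), ∀ t : ℝ, R < |t| →
    ‖∫ x, Complex.exp (t * x * Complex.I) ∂μ‖ ≤ 1 - C / |t| ^ b

open Filter Bornology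

lemma eight_mul_sq_abs_sub_round_le_one_sub_cos (x : ℝ) :
    8 * |x - round x| ^ 2 ≤ 1 - cos (2 * π * x) := by
  set y := x - round x
  have hy : |π * y| ≤ π / 2 := by
    rw [abs_mul, abs_of_pos pi_pos]
    nlinarith [abs_sub_round x, pi_pos]
  have hcos : cos (2 * π * x) = 1 - 2 * sin (π * y) ^ 2 := by
    rw [show 2 * π * x = 2 * (π * y) + round x * (2 * π) by ring, cos_add_int_mul_two_pi,
      cos_two_mul, cos_sq']
    ring
  have hsin : 2 * |y| ≤ |sin (π * y)| := by
    have := mul_abs_le_abs_sin hy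
    rwa [abs_mul, abs_of_pos pi_pos, ← mul_assoc, div_mul_cancel₀ _ pi_ne_zero] at this
  rw [hcos, ← sq_abs (sin _)]
  nlinarith [abs_nonneg y]

lemma norm_ofReal_add_mul_exp_le {a c : ℝ} (ha : 0 ≤ a) (hc : 0 ≤ c) (hac : a + c ≤ 1) (θ : ℝ) :
    ‖(a : ℂ) + c * Complex.exp (θ * Complex.I)‖ ≤ a + c - a * c * (1 - cos θ) := by
  have hcos := cos_le_one θ
  have hrhs : 0 ≤ a + c - a * c * (1 - cos θ) := by
    nlinarith [neg_one_le_cos θ, mul_nonneg ha hc, sq_nonneg (a - c)]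
  have hsq : ‖(a : ℂ) + c * Complex.exp (θ * Complex.I)‖ ^ 2
      = (a + c) ^ 2 - 2 * a * c * (1 - cos θ) := by
    rw [Complex.exp_mul_I, ← Complex.ofReal_cos, ← Complex.ofReal_sin, Complex.sq_norm,
      Complex.normSq_apply]
    simp only [Complex.add_re, Complex.add_im, Complex.mul_re, Complex.mul_im,
      Complex.ofReal_re, Complex.ofReal_im, Complex.I_re, Complex.I_im, mul_zero, zero_mul,
      sub_zero, add_zero, zero_add, mul_one]
    linear_combination c ^ 2 * sin_sq_add_cos_sq θ
  refine (pow_le_pow_iff_left₀ (norm_nonneg _) hrhs two_ne_zero).1 ?_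
  rw [hsq]
  nlinarith [mul_nonneg (mul_nonneg ha hc) (sub_nonneg.2 hcos), sq_nonneg (a * c * (1 - cos θ))]

lemma norm_sum_mul_exp_le {ι : Type*} [Fintype ι] {c : ι → ℝ}
    (hc : ∀ k, 0 ≤ c k) (hsum : ∑ k, c k = 1) (θ : ι → ℝ) {i j : ι} (hij : i ≠ j) :
    ‖∑ k, (c k : ℂ) * Complex.exp (θ k * Complex.I)‖ ≤ 1 - c i * c j * (1 - cos (θ j - θ i)) := by
  classical
  set rest := (Finset.univ.erase i).erase j
  have hj : j ∈ Finset.univ.erase i := Finset.mem_erase.2 ⟨hij.symm, Finset.mem_univ j⟩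
  have hsplit : ∀ {M : Type} [AddCommMonoid M] (f : ι → M),
      ∑ k, f k = f i + f j + ∑ k ∈ rest, f k := fun f => by
    rw [← Finset.add_sum_erase _ _ (Finset.mem_univ i), ← Finset.add_sum_erase _ _ hj, add_assoc]
  have hnorm : ∀ k, ‖(c k : ℂ) * Complex.exp (θ k * Complex.I)‖ = c k := fun k => by
    rw [norm_mul, Complex.norm_exp_ofReal_mul_I, mul_one, Complex.norm_real,
      Real.norm_of_nonneg (hc k)]
  have hpair : (c i : ℂ) * Complex.exp (θ i * Complex.I) + c j * Complex.exp (θ j * Complex.I)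
      = Complex.exp (θ i * Complex.I) * (c i + c j * Complex.exp (↑(θ j - θ i) * Complex.I)) := by
    rw [mul_add, Complex.ofReal_sub, sub_mul, Complex.exp_sub]
    field_simp
  have hrest : 0 ≤ ∑ k ∈ rest, c k := Finset.sum_nonneg fun k _ => hc k
  rw [hsplit, hpair]
  calc _ ≤ ‖(c i : ℂ) + c j * Complex.exp (↑(θ j - θ i) * Complex.I)‖
        + ∑ k ∈ rest, ‖(c k : ℂ) * Complex.exp (θ k * Complex.I)‖ := by
        grw [norm_add_le, norm_mul, Complex.norm_exp_ofReal_mul_I, one_mul, norm_sum_le]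
    _ ≤ c i + c j - c i * c j * (1 - cos (θ j - θ i)) + ∑ k ∈ rest, c k := by
        simp only [hnorm]
        gcongr
        exact norm_ofReal_add_mul_exp_le (hc i) (hc j) (by linarith [hsplit c]) _
    _ = 1 - c i * c j * (1 - cos (θ j - θ i)) := by linarith [hsplit c]

lemma integral_exp_mul_I_sum_smul_dirac {ι : Type*} [Fintype ι] {c : ι → ℝ} (hc : ∀ i, 0 ≤ c i)
    (x : ι → ℝ) (t : ℝ) :
    ∫ y, Complex.exp (t * y * Complex.I) ∂(∑ i, ENNReal.ofReal (c i) • Measure.dirac (x i))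
      = ∑ i, (c i : ℂ) * Complex.exp ((t * x i : ℝ) * Complex.I) := by
  have hint : ∀ i ∈ Finset.univ, Integrable (fun y : ℝ => Complex.exp (t * y * Complex.I))
      (ENNReal.ofReal (c i) • Measure.dirac (x i)) := fun i _ =>
    (integrable_dirac (by simp)).smul_measure ENNReal.ofReal_ne_top
  rw [integral_finsetSum_measure hint]
  refine Finset.sum_congr rfl fun i _ => ?_
  rw [integral_smul_measure, integral_dirac, ENNReal.toReal_ofReal (hc i), Complex.real_smul]
  push_cast
  ring_nf

lemma memC1_of_eventually {μ : Measure ℝ} {b C : ℝ} (hC : 0 < C)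
    (h : ∀ᶠ t : ℝ in cobounded ℝ, ‖∫ x, Complex.exp (t * x * Complex.I) ∂μ‖ ≤ 1 - C / |t| ^ b) :
    memC1 μ b := by
  obtain ⟨r, -, hr⟩ := hasBasis_cobounded_norm.eventually_iff.1 h
  exact ⟨C, hC, max r 1, by positivity, fun t ht => hr ((le_max_left r 1).trans ht.le)⟩

lemma memC1_sum_smul_dirac {ι : Type*} [Fintype ι] {U : ι → ℝ} {i₀ : ι} {b : ℝ} (hb : 0 ≤ b)
    (hU : ∀ᶠ s : ℝ in cobounded ℝ,
      ∃ j, |s| ^ (-b) ≤ |s * (U j - U i₀) - round (s * (U j - U i₀))|)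
    {c : ι → ℝ} (hc : ∀ i, 0 < c i) (hsum : ∑ i, c i = 1) :
    memC1 (∑ i, ENNReal.ofReal (c i) • Measure.dirac (U i)) (2 * b) := by
  have : Nonempty ι := ⟨i₀⟩
  obtain ⟨i₁, hi₁⟩ := Finite.exists_min c
  have hscale : Tendsto (fun t : ℝ => t / (2 * π)) (cobounded ℝ) (cobounded ℝ) := by
    rw [← tendsto_norm_atTop_iff_cobounded]
    simpa only [norm_div, Real.norm_of_nonneg two_pi_pos.le] using
      tendsto_norm_cobounded_atTop.atTop_div_const two_pi_pos
  refine memC1_of_eventually (C := 8 * c i₁ ^ 2) (by positivity [hc i₁]) ?_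
  filter_upwards [hscale.eventually hU, eventually_cobounded_le_norm 1] with t ⟨j, hj⟩ ht
  rw [Real.norm_eq_abs] at ht
  set s := t / (2 * π)
  have hs : 0 < |s| := by rw [abs_div]; exact div_pos (by linarith) (by positivity)
  have hj₀ : i₀ ≠ j := by
    rintro rfl
    simp only [sub_self, mul_zero, round_zero, Int.cast_zero, abs_zero] at hj
    exact (rpow_pos_of_pos hs _).not_ge hj
  have hts : |t| ^ (-b) ≤ |s| ^ (-b) := by
    refine rpow_le_rpow_of_nonpos hs ?_ (neg_nonpos.2 hb)
    rw [abs_div, abs_of_pos two_pi_pos]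
    exact div_le_self (abs_nonneg t) (by linarith [two_le_pi])
  have hcos := eight_mul_sq_abs_sub_round_le_one_sub_cos (s * (U j - U i₀))
  rw [show 2 * π * (s * (U j - U i₀)) = t * U j - t * U i₀ by
    rw [← mul_assoc, mul_div_cancel₀ t two_pi_pos.ne', mul_sub]] at hcos
  have hpow : 8 / |t| ^ (2 * b) ≤ 1 - cos (t * U j - t * U i₀) := by
    have h8 : 8 / |t| ^ (2 * b) = 8 * (|t| ^ (-b)) ^ 2 := by
      rw [← rpow_natCast, ← rpow_mul (abs_nonneg t), Nat.cast_ofNat, neg_mul, mul_comm b,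
        rpow_neg (abs_nonneg t), div_eq_mul_inv]
    grw [h8, hts, hj]
    exact hcos
  have hc₁ : c i₁ ^ 2 ≤ c i₀ * c j := by
    rw [sq]; exact mul_le_mul (hi₁ _) (hi₁ _) (hc i₁).le (hc i₀).le
  rw [integral_exp_mul_I_sum_smul_dirac (fun i => (hc i).le)]
  refine (norm_sum_mul_exp_le (fun i => (hc i).le) hsum _ hj₀).trans ?_
  have := mul_le_mul hc₁ hpow (by positivity) (mul_pos (hc i₀) (hc j)).le
  rw [mul_comm 8, mul_div_assoc]
  linarith

lemma volume_abs_le_and_abs_sub_round_lt_le {n : ℤ} (hn : n ≠ 0) {L : ℝ} (hL : 0 ≤ L)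
    {δ : ℝ} (hδ : 0 ≤ δ) :
    volume {x : ℝ | |x| ≤ L ∧ |n * x - round (n * x)| < δ} ≤ ENNReal.ofReal ((4 * L + 6) * δ) := by
  have hn' : (1 : ℝ) ≤ |(n : ℝ)| := by rw [← Int.cast_abs]; exact_mod_cast Int.one_le_abs hn
  set K := ⌈|(n : ℝ)| * L⌉
  -- the rounding integer `k` of `n x` satisfies `|k| ≤ K`, and `x` lies within `δ / |n|` of `k / n`
  have hcover : {x : ℝ | |x| ≤ L ∧ |n * x - round (n * x)| < δ}
      ⊆ ⋃ k ∈ Finset.Icc (-K) K, Metric.ball ((k : ℝ) / n) (δ / |(n : ℝ)|) := by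
    rintro x ⟨hx, hδx⟩
    have hk : |round ((n : ℝ) * x)| ≤ K := by
      refine Int.le_ceil_iff.2 ?_
      have hround := abs_sub_round ((n : ℝ) * x)
      have hnx : |(n : ℝ) * x| ≤ |(n : ℝ)| * L := by rw [abs_mul]; gcongr
      have := abs_sub_abs_le_abs_sub ((round ((n : ℝ) * x) : ℤ) : ℝ) ((n : ℝ) * x)
      rw [abs_sub_comm] at this
      push_cast
      linarith
    refine Set.mem_biUnion (x := round ((n : ℝ) * x)) (Finset.mem_Icc.2 (abs_le.1 hk)) ?_
    rw [Metric.mem_ball, Real.dist_eq, lt_div_iff₀ (by positivity), ← abs_mul, sub_mul,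
      div_mul_cancel₀ _ (by positivity), mul_comm x]
    exact hδx
  have hK : ((2 * K + 1 : ℤ) : ℝ) ≤ 2 * |(n : ℝ)| * L + 3 := by
    have := Int.ceil_lt_add_one (|(n : ℝ)| * L)
    push_cast
    linarith
  calc _ ≤ ∑ k ∈ Finset.Icc (-K) K, volume (Metric.ball ((k : ℝ) / n) (δ / |(n : ℝ)|)) :=
        (measure_mono hcover).trans (measure_biUnion_finset_le _ _)
    _ = ((2 * K + 1).toNat : ENNReal) * ENNReal.ofReal (2 * (δ / |(n : ℝ)|)) := by
        simp only [Real.volume_ball, Finset.sum_const, Int.card_Icc, nsmul_eq_mul]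
        ring_nf
    _ ≤ ENNReal.ofReal ((4 * L + 6) * δ) := by
        have hK0 : 0 ≤ 2 * K + 1 := by
          have : 0 ≤ K := Int.ceil_nonneg (by positivity)
          omega
        have hcast : ((2 * K + 1).toNat : ℝ) = ((2 * K + 1 : ℤ) : ℝ) := by
          exact_mod_cast Int.toNat_of_nonneg hK0
        rw [← ENNReal.ofReal_natCast, hcast, ← ENNReal.ofReal_mul (by positivity)]
        refine ENNReal.ofReal_le_ofReal ?_
        rw [← mul_div_assoc, ← mul_div_assoc, div_le_iff₀ (by positivity)]
        push_cast at hK ⊢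
        nlinarith

lemma ae_eventually_exists_rpow_neg_le_abs_sub_round {q : ℕ} {b : ℝ} (hqb : 1 < q * b) :
    ∀ᵐ β : Fin q → ℝ, ∀ᶠ n : ℤ in cofinite,
      ∃ i, |(n : ℝ)| ^ (-b) ≤ |n * β i - round (n * β i)| := by
  have hq : q ≠ 0 := by rintro rfl; norm_num at hqb
  have hb : 0 < b := pos_of_mul_pos_right (one_pos.trans hqb) q.cast_nonneg
  set bad : ℕ → ℤ → Set (Fin q → ℝ) := fun L n => Set.univ.pi fun _ =>
    {x | |x| ≤ L ∧ |n * x - round (n * x)| < |(n : ℝ)| ^ (-b)}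
  have hvol (L : ℕ) (n : ℤ) :
      volume (bad L n) ≤ ENNReal.ofReal ((4 * L + 6) ^ q * |(n : ℝ)| ^ (-(q * b))) := by
    rw [volume_pi_pi, Finset.prod_const, Finset.card_univ, Fintype.card_fin]
    rcases eq_or_ne n 0 with rfl | hn
    · simp [Real.zero_rpow, hb.ne', hq]
    calc _ ≤ ENNReal.ofReal ((4 * L + 6) * |(n : ℝ)| ^ (-b)) ^ q := by
          gcongr
          exact volume_abs_le_and_abs_sub_round_lt_le hn L.cast_nonneg (by positivity)
      _ = _ := by
          rw [← ENNReal.ofReal_pow (by positivity), mul_pow, ← rpow_natCast (|(n : ℝ)| ^ (-b)) q,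
            ← rpow_mul (abs_nonneg _), neg_mul, mul_comm b]
  have hae (L : ℕ) : ∀ᵐ β, ∀ᶠ n in cofinite, β ∉ bad L n := by
    have hsum : Summable fun n : ℤ => (4 * (L : ℝ) + 6) ^ q * |(n : ℝ)| ^ (-(q * b)) :=
      (summable_abs_int_rpow hqb).mul_left _
    have htsum : ∑' n, volume (bad L n) ≠ ⊤ := by
      refine ne_top_of_le_ne_top ?_ (ENNReal.tsum_le_tsum (hvol L))
      rw [← ENNReal.ofReal_tsum_of_nonneg (fun n => by positivity) hsum]
      exact ENNReal.ofReal_ne_top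
    filter_upwards [ae_finite_setOfPred_mem htsum] with β hβ
    exact eventually_cofinite.2 (by simpa only [not_not] using hβ)
  filter_upwards [ae_all_iff.2 hae] with β hβ
  obtain ⟨L, hL⟩ := exists_nat_ge (∑ i, |β i|)
  filter_upwards [hβ L] with n hn
  simp only [bad, Set.mem_pi, Set.mem_univ, Set.mem_ofPred_eq, true_imp_iff, not_forall,
    not_and, not_lt] at hn
  obtain ⟨i, hi⟩ := hn
  exact ⟨i, hi ((Finset.single_le_sum (fun j _ => abs_nonneg (β j)) (Finset.mem_univ i)).trans hL)⟩

lemma ae_comp_of_surjective_linearMap {E F : Type*} [NormedAddCommGroup E] [NormedSpace ℝ E]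
    [MeasurableSpace E] [BorelSpace E] [FiniteDimensional ℝ E] [NormedAddCommGroup F]
    [NormedSpace ℝ F] [MeasurableSpace F] [BorelSpace F] (μ : Measure E) [μ.IsAddHaarMeasure]
    {ν : Measure F} [ν.IsAddHaarMeasure] {L : E →ₗ[ℝ] F} (hL : Function.Surjective L)
    {P : F → Prop} (hP : ∀ᵐ y ∂ν, P y) : ∀ᵐ x ∂μ, P (L x) := by
  obtain ⟨s, hs, hsm, hsP⟩ := hP.exists_measurable_mem
  filter_upwards [(ae_comp_linearMap_mem_iff L μ ν hL hsm).2 hs] with x hx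
  exact hsP _ hx

lemma ae_ne_zero_and_div_apply_zero {m : ℕ} {P : (Fin m → ℝ) → Prop}
    (hP : ∀ᵐ β : Fin m → ℝ, P β) :
    ∀ᵐ α : Fin (m + 1) → ℝ, α 0 ≠ 0 ∧ P fun i => α i.succ / α 0 := by
  obtain ⟨s, hs, hsm, hsP⟩ := hP.exists_measurable_mem
  -- Fubini along `Fin (m + 1) → ℝ ≃ ℝ × (Fin m → ℝ)`; each slice `x ≠ 0` is a rescaling
  have hslice : ∀ᵐ x : ℝ, ∀ᵐ v : Fin m → ℝ, x ≠ 0 ∧ x⁻¹ • v ∈ s := by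
    filter_upwards [Measure.ae_ne volume 0] with x hx
    filter_upwards [(Measure.quasiMeasurePreserving_smul volume (inv_ne_zero hx)).ae hs] with v hv
    exact ⟨hx, hv⟩
  have hmeas : MeasurableSet {z : ℝ × (Fin m → ℝ) | z.1 ≠ 0 ∧ z.1⁻¹ • z.2 ∈ s} :=
    (measurableSet_singleton 0).compl.preimage measurable_fst |>.inter
      (hsm.preimage (measurable_fst.inv.smul measurable_snd))
  have hprod := (Measure.ae_prod_iff_ae_ae hmeas).2 hslice
  rw [← Measure.volume_eq_prod] at hprod
  filter_upwards [(volume_preserving_piFinSuccAbove (fun _ : Fin (m + 1) => ℝ) 0)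
    |>.quasiMeasurePreserving.ae hprod] with α hα
  simp only [MeasurableEquiv.piFinSuccAbove_apply, Fin.insertNthEquiv_zero,
    Fin.consEquiv_symm_apply] at hα
  refine ⟨hα.1, hsP _ ?_⟩
  convert hα.2 using 1
  ext i
  simp [div_eq_inv_mul, Fin.tail]

lemma abs_sub_round_le_abs_sub_round_add (x y : ℝ) :
    |y - round y| ≤ |x - round x| + |y - x| :=
  calc |y - round y| ≤ |y - round x| := round_le y (round x)
    _ = |(x - round x) + (y - x)| := by ring_nf
    _ ≤ |x - round x| + |y - x| := abs_add_le _ _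

lemma tendsto_round_mul_cobounded_cofinite {a : ℝ} (ha : a ≠ 0) :
    Tendsto (fun s : ℝ => round (s * a)) (cobounded ℝ) cofinite := by
  rw [← cocompact_eq_cofinite, ← Metric.cobounded_eq_cocompact,
    ← tendsto_norm_atTop_iff_cobounded]
  have hlim : Tendsto (fun s : ℝ => ‖s‖ * |a| - 1 / 2) (cobounded ℝ) atTop :=
    tendsto_atTop_add_const_right _ _ (tendsto_norm_cobounded_atTop.atTop_mul_const (abs_pos.2 ha))
  refine tendsto_atTop_mono (fun s => ?_) hlim
  have := abs_sub_abs_le_abs_sub (s * a) (round (s * a))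
  rw [Int.norm_eq_abs, Real.norm_eq_abs, ← abs_mul]
  linarith [abs_sub_round (s * a)]

lemma eventually_mul_rpow_neg_le_mul_rpow_neg {A b b' : ℝ} (hA : 0 < A) (hb : b' < b) (K : ℝ) :
    ∀ᶠ x : ℝ in atTop, K * x ^ (-b) ≤ (A * x) ^ (-b') := by
  filter_upwards [(tendsto_rpow_atTop (sub_pos.2 hb)).eventually_ge_atTop (K * A ^ b'),
    eventually_gt_atTop 0] with x hx hx0
  rw [mul_rpow hA.le hx0.le, rpow_neg hA.le,
    show -b' = (b - b') + -b by ring, rpow_add hx0]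
  calc K * x ^ (-b) = (A ^ b')⁻¹ * (K * A ^ b') * x ^ (-b) := by field_simp
    _ ≤ (A ^ b')⁻¹ * x ^ (b - b') * x ^ (-b) := by gcongr
    _ = _ := by ring

lemma eventually_exists_rpow_neg_le_abs_sub_round_mul {q : ℕ} {b b' : ℝ} (hb' : 0 < b')
    (hb'b : b' < b) {α : Fin (q + 1) → ℝ} (hα : α 0 ≠ 0)
    (h : ∀ᶠ n : ℤ in cofinite, ∃ i : Fin q,
      |(n : ℝ)| ^ (-b') ≤ |n * (α i.succ / α 0) - round (n * (α i.succ / α 0))|) :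
    ∀ᶠ s : ℝ in cobounded ℝ, ∃ i, |s| ^ (-b) ≤ |s * α i - round (s * α i)| := by
  set A := |α 0| + 1
  set B := ∑ i : Fin q, |α i.succ / α 0|
  have hround := tendsto_round_mul_cobounded_cofinite hα
  filter_upwards [hround.eventually h, hround.eventually (eventually_cofinite_ne 0),
    eventually_cobounded_le_norm 1, tendsto_norm_cobounded_atTop.eventually
      (eventually_mul_rpow_neg_le_mul_rpow_neg (by positivity : 0 < A) hb'b (B + 1))]
    with s ⟨i, hi⟩ hn0 hs1 hsB
  set n := round (s * α 0)
  rw [Real.norm_eq_abs] at hs1 hsB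
  -- either `s α₀` is already far from `ℤ`, or `s α (i+1) = (s α₀) βᵢ` is close to `n βᵢ`
  by_cases hfar : |s| ^ (-b) ≤ |s * α 0 - n|
  · exact ⟨0, hfar⟩
  refine ⟨i.succ, ?_⟩
  replace hfar := (not_le.1 hfar).le
  have hβ : |α i.succ / α 0| ≤ B :=
    Finset.single_le_sum (f := fun j : Fin q => |α j.succ / α 0|) (fun j _ => abs_nonneg _)
      (Finset.mem_univ i)
  have hdist : |n * (α i.succ / α 0) - s * α i.succ| ≤ |s| ^ (-b) * B := by
    rw [show s * α i.succ = s * α 0 * (α i.succ / α 0) by field_simp, ← sub_mul, abs_mul,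
      abs_sub_comm]
    exact mul_le_mul hfar hβ (abs_nonneg _) (by positivity)
  have hn : |(n : ℝ)| ≤ A * |s| := by
    have := abs_sub_abs_le_abs_sub (n : ℝ) (s * α 0)
    rw [abs_sub_comm, abs_mul] at this
    nlinarith [abs_sub_round (s * α 0)]
  have hnb : (A * |s|) ^ (-b') ≤ |(n : ℝ)| ^ (-b') :=
    rpow_le_rpow_of_nonpos (abs_pos.2 (Int.cast_ne_zero.2 hn0)) hn (neg_nonpos.2 hb'.le)
  have := abs_sub_round_le_abs_sub_round_add (s * α i.succ) (n * (α i.succ / α 0))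
  nlinarith

lemma ae_eventually_exists_rpow_neg_le_abs_sub_round_mul {q : ℕ} {b : ℝ} (hqb : 1 < q * b) :
    ∀ᵐ α : Fin (q + 1) → ℝ, ∀ᶠ s : ℝ in cobounded ℝ,
      ∃ i, |s| ^ (-b) ≤ |s * α i - round (s * α i)| := by
  have hq : (0 : ℝ) < q := by
    rcases q.eq_zero_or_pos with rfl | hq
    · norm_num at hqb
    · exact_mod_cast hq
  obtain ⟨b', hb', hb'b⟩ := exists_between ((div_lt_iff₀' hq).2 hqb)
  filter_upwards [ae_ne_zero_and_div_apply_zero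
    (ae_eventually_exists_rpow_neg_le_abs_sub_round ((div_lt_iff₀' hq).1 hb'))] with α hα
  exact eventually_exists_rpow_neg_le_abs_sub_round_mul ((one_div_pos.2 hq).trans hb') hb'b
    hα.1 hα.2

lemma ae_apply_succ_sub_apply_zero {m : ℕ} {P : (Fin m → ℝ) → Prop}
    (hP : ∀ᵐ V : Fin m → ℝ, P V) : ∀ᵐ U : Fin (m + 1) → ℝ, P fun j => U j.succ - U 0 := by
  let L : (Fin (m + 1) → ℝ) →ₗ[ℝ] (Fin m → ℝ) :=
    LinearMap.pi fun j => .proj (R := ℝ) (φ := fun _ => ℝ) j.succ - .proj 0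
  have hL : Function.Surjective L := fun V => ⟨Fin.cons 0 V, by ext j; simp [L]⟩
  exact ae_comp_of_surjective_linearMap volume hL hP

theorem statement3
    (p : ℕ) (hp : 3 ≤ p) (b : ℝ) (hb : 1 / ((p : ℝ) - 2) < b) :
    ∀ᵐ U : Fin p → ℝ ∂volume,
      ∀ c : Fin p → ℝ, (∀ i, 0 < c i) → ∑ i, c i = 1 →
        memC1 (∑ i, ENNReal.ofReal (c i) • Measure.dirac (U i)) (2 * b) := by
  obtain ⟨q, rfl⟩ : ∃ q, p = q + 3 := ⟨p - 3, by omega⟩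
  have hqb : 1 < ((q + 1 : ℕ) : ℝ) * b := by
    rwa [show ((q + 3 : ℕ) : ℝ) - 2 = ((q + 1 : ℕ) : ℝ) by push_cast; ring,
      div_lt_iff₀' (by positivity)] at hb
  have hb0 : 0 ≤ b := (pos_of_mul_pos_right (one_pos.trans hqb) (Nat.cast_nonneg _)).le
  filter_upwards [ae_apply_succ_sub_apply_zero
    (ae_eventually_exists_rpow_neg_le_abs_sub_round_mul hqb)] with U hU c hc hsum
  exact memC1_sum_smul_dirac hb0 (hU.mono fun s ⟨j, hj⟩ => ⟨j.succ, hj⟩) hc hsum
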